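/- For a = 1, 2, 3, the operators U_a on Θ^{4ℓ+}_{00} defined by (U₁f)(z) = e^{πiℓ} f(z + 1/2), (U₃f)(z) = e^{πiℓ} e^{πiℓ(4z+τ)} f(z + τ/2), and U₂ = U₃U₁ satisfy U_a² = (−1)^{2ℓ} · id and U_a U_b = (−1)^{2ℓ} U_b U_a for a ≠ b. -/

import Mathlib

open Real

/-- Membership in the space `Θ^{4ℓ+}_{00}` (with `L = 2ℓ`). -/
def InThetaSpace (τ : ℂ) (L : ℕ) (f : ℂ → ℂ) : Prop :=
  Differentiable ℂ f ∧ (∀ z, f (z + 1) = f z) ∧ (∀ z, f (-z) = f z) ∧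
    ∀ z, f (z + τ) = Complex.exp (-(2 * (L : ℂ)) * (π : ℂ) * Complex.I * (2 * z + τ)) * f z

/-- `(U₁ f)(z) = e^{πiℓ} f(z + 1/2)`, with `ℓ = L/2`. -/
noncomputable def U1op (L : ℕ) (f : ℂ → ℂ) (z : ℂ) : ℂ :=
  Complex.exp ((π : ℂ) * Complex.I * ((L : ℂ) / 2)) * f (z + 1 / 2)

/-- `(U₃ f)(z) = e^{πiℓ} e^{πiℓ(4z+τ)} f(z + τ/2)`, with `ℓ = L/2`. -/
noncomputable def U3op (τ : ℂ) (L : ℕ) (f : ℂ → ℂ) (z : ℂ) : ℂ :=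
  Complex.exp ((π : ℂ) * Complex.I * ((L : ℂ) / 2)) *
    Complex.exp ((π : ℂ) * Complex.I * ((L : ℂ) / 2) * (4 * z + τ)) * f (z + τ / 2)

/-- The operators `U₁`, `U₂ = U₃U₁`, `U₃`, indexed by `Fin 3` (index `0 ↦ U₁`,
`1 ↦ U₂`, `2 ↦ U₃`). -/
noncomputable def Uop (τ : ℂ) (L : ℕ) : Fin 3 → (ℂ → ℂ) → (ℂ → ℂ) :=
  ![U1op L, fun f => U3op τ L (U1op L f), U3op τ L]

/-!
`U₁²` is `(-1)^{2ℓ}` on `1`-periodic functions and `U₃²` is `(-1)^{2ℓ}` on functions with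
the `τ`-quasi-periodicity of the space. Moving `U₁` past `U₃` shifts the exponent
`πiℓ(4z + τ)` by `2πiℓ`, so `U₁U₃ = (-1)^{2ℓ} U₃U₁` on all functions. As `((-1)^{2ℓ})² = 1`, every
relation involving `U₂ = U₃U₁` follows formally from these three, `U₃` being linear.
That `U₁` and `U₃` preserve the space is a check of exponents modulo `2πiℤ`.
-/

open Complex

lemma Complex.exp_pi_mul_I_mul_natCast (L : ℕ) : exp (π * I * L) = (-1) ^ L := by
  rw [mul_comm, exp_nat_mul, exp_pi_mul_I]

lemma neg_one_pow_smul_neg_one_pow_smul {R M : Type*} [Ring R] [AddCommGroup M] [Module R M]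
    (n : ℕ) (m : M) : (-1 : R) ^ n • (-1 : R) ^ n • m = m := by
  rw [smul_smul, ← pow_add, Even.neg_one_pow ⟨n, rfl⟩, one_smul]

lemma eq_neg_one_pow_smul_symm {R M : Type*} [Ring R] [AddCommGroup M] [Module R M]
    {n : ℕ} {m m' : M} (h : m = (-1 : R) ^ n • m') : m' = (-1 : R) ^ n • m := by
  rw [h, neg_one_pow_smul_neg_one_pow_smul]

variable {τ : ℂ} {L : ℕ} {f : ℂ → ℂ}

lemma U3op_smul (c : ℂ) : U3op τ L (c • f) = c • U3op τ L f := by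
  ext z
  simp only [U3op, Pi.smul_apply, smul_eq_mul]
  ring

lemma U1op_U1op (h1 : Function.Periodic f 1) : U1op L (U1op L f) = (-1 : ℂ) ^ L • f := by
  ext z
  rw [Pi.smul_apply, smul_eq_mul, U1op, U1op, add_assoc, add_halves, h1,
    ← exp_pi_mul_I_mul_natCast, ← mul_assoc, ← Complex.exp_add]
  congr 2
  ring

lemma U3op_U3op (hτ : ∀ z, f (z + τ) = exp (-(2 * (L : ℂ)) * π * I * (2 * z + τ)) * f z) :
    U3op τ L (U3op τ L f) = (-1 : ℂ) ^ L • f := by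
  ext z
  rw [Pi.smul_apply, smul_eq_mul, U3op, U3op, add_assoc, add_halves, hτ,
    ← exp_pi_mul_I_mul_natCast]
  simp only [← mul_assoc, ← Complex.exp_add]
  congr 2
  ring

lemma U1op_U3op : U1op L (U3op τ L f) = (-1 : ℂ) ^ L • U3op τ L (U1op L f) := by
  ext z
  rw [Pi.smul_apply, smul_eq_mul, U1op, U3op, U3op, U1op, ← exp_pi_mul_I_mul_natCast,
    add_right_comm]
  simp only [← mul_assoc, ← Complex.exp_add]
  congr 2
  ring

namespace InThetaSpace

lemma U1op (hf : InThetaSpace τ L f) : InThetaSpace τ L (U1op L f) := by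
  obtain ⟨hd, h1, heven, hτ⟩ := hf
  refine ⟨by unfold _root_.U1op; fun_prop, fun z => ?_, fun z => ?_, fun z => ?_⟩
  · rw [_root_.U1op, _root_.U1op, add_right_comm, h1]
  · rw [_root_.U1op, _root_.U1op, show -z + 1 / 2 = -(z - 1 / 2) by ring, heven, ← h1,
      show z - 1 / 2 + 1 = z + 1 / 2 by ring]
  · rw [_root_.U1op, _root_.U1op, add_right_comm, hτ, mul_left_comm, ← mul_assoc,
      ← mul_assoc]
    congr 2
    refine exp_eq_exp_iff_exists_int.2 ⟨-L, ?_⟩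
    push_cast
    ring

lemma U3op (hf : InThetaSpace τ L f) : InThetaSpace τ L (U3op τ L f) := by
  obtain ⟨hd, h1, heven, hτ⟩ := hf
  refine ⟨by unfold _root_.U3op; fun_prop, fun z => ?_, fun z => ?_, fun z => ?_⟩
  · rw [_root_.U3op, _root_.U3op, add_right_comm, h1]
    congr 2
    refine exp_eq_exp_iff_exists_int.2 ⟨L, ?_⟩
    push_cast
    ring
  · rw [_root_.U3op, _root_.U3op, show -z + τ / 2 = -(z - τ / 2) by ring, heven,
      show z + τ / 2 = z - τ / 2 + τ by ring, hτ]
    simp only [← mul_assoc, ← Complex.exp_add]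
    congr 2
    ring
  · rw [_root_.U3op, _root_.U3op, add_right_comm, hτ]
    simp only [← mul_assoc, ← Complex.exp_add]
    congr 2
    ring

end InThetaSpace

lemma Uop_zero : Uop τ L 0 = U1op L := rfl

lemma Uop_one : Uop τ L 1 f = U3op τ L (U1op L f) := rfl

lemma Uop_two : Uop τ L 2 = U3op τ L := rfl

lemma Uop_Uop_self (h1 : Function.Periodic f 1)
    (hτ : ∀ z, f (z + τ) = exp (-(2 * (L : ℂ)) * π * I * (2 * z + τ)) * f z) (a : Fin 3) :
    Uop τ L a (Uop τ L a f) = (-1 : ℂ) ^ L • f := by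
  fin_cases a <;> simp [Uop_zero, Uop_one, Uop_two, U1op_U1op h1, U3op_U3op hτ, U1op_U3op,
    U3op_smul, neg_one_pow_smul_neg_one_pow_smul]

lemma Uop_Uop_of_lt {a b : Fin 3} (hab : a < b) :
    Uop τ L a (Uop τ L b f) = (-1 : ℂ) ^ L • Uop τ L b (Uop τ L a f) := by
  fin_cases a <;> fin_cases b <;>
    simp [Uop_zero, Uop_one, Uop_two, U1op_U3op, U3op_smul] at hab ⊢

lemma Uop_Uop_of_ne {a b : Fin 3} (hab : a ≠ b) :
    Uop τ L a (Uop τ L b f) = (-1 : ℂ) ^ L • Uop τ L b (Uop τ L a f) := by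
  rcases hab.lt_or_gt with hab | hab
  · exact Uop_Uop_of_lt hab
  · exact eq_neg_one_pow_smul_symm (Uop_Uop_of_lt hab)

theorem Uop_relations_general (τ : ℂ) (L : ℕ) (f : ℂ → ℂ) (hf : InThetaSpace τ L f) :
    InThetaSpace τ L (U1op L f) ∧ InThetaSpace τ L (U3op τ L f) ∧
      (∀ a : Fin 3, ∀ z, Uop τ L a (Uop τ L a f) z = (-1 : ℂ) ^ L * f z) ∧
      ∀ a b : Fin 3, a ≠ b → ∀ z,
        Uop τ L a (Uop τ L b f) z = (-1 : ℂ) ^ L * Uop τ L b (Uop τ L a f) z :=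
  ⟨hf.U1op, hf.U3op, fun a => congrFun (Uop_Uop_self hf.2.1 hf.2.2.2 a),
    fun _ _ hab => congrFun (Uop_Uop_of_ne hab)⟩

/-- `U₁`, `U₃` preserve `Θ^{4ℓ+}_{00}`, and on that space the operators satisfy
`U_a² = (−1)^{2ℓ}` and `U_a U_b = (−1)^{2ℓ} U_b U_a` for `a ≠ b` (`L = 2ℓ`). -/
theorem Uop_relations (τ : ℂ) (hτ : 0 < τ.im) (L : ℕ) (hL : 0 < L)
    (f : ℂ → ℂ) (hf : InThetaSpace τ L f) :
    InThetaSpace τ L (U1op L f) ∧ InThetaSpace τ L (U3op τ L f) ∧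
      (∀ a : Fin 3, ∀ z, Uop τ L a (Uop τ L a f) z = (-1 : ℂ) ^ L * f z) ∧
      ∀ a b : Fin 3, a ≠ b → ∀ z,
        Uop τ L a (Uop τ L b f) z = (-1 : ℂ) ^ L * Uop τ L b (Uop τ L a f) z :=
  Uop_relations_general τ L f hf
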